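/- arXiv:0901.1379 — 6 statements merged into one kernel-verified Lean document; each statement's English description precedes it below -/
import Mathlib

section
/- Let f be a function analytic in a neighborhood of 0 (or a formal power series) with f(0) = 1 satisfying f'(z) = -f(-z)² for all z. Then f(z)³ + f(-z)³ = 2 for all z in the domain. -/
/-! Differentiating `f z ^ 3 + f (-z) ^ 3` with `f' z = -f (-z) ^ 2` gives
`-3 f z ^ 2 f (-z) ^ 2 + 3 f (-z) ^ 2 f z ^ 2 = 0`, so on a connected symmetric domain around `0`
the sum is constant, equal to its value `2 f 0 ^ 3 = 2` at the origin. -/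

theorem hasDerivAt_cube_add_cube_neg {𝕜 : Type*} [NontriviallyNormedField 𝕜] {f : 𝕜 → 𝕜}
    {x : 𝕜} (hx : HasDerivAt f (-f (-x) ^ 2) x) (hnx : HasDerivAt f (-f x ^ 2) (-x)) :
    HasDerivAt (fun z => f z ^ 3 + f (-z) ^ 3) 0 x := by
  have hcomp : HasDerivAt (fun z => f (-z)) (-f x ^ 2 * -1) x :=
    hnx.comp x (hasDerivAt_neg x)
  exact ((hx.fun_pow 3).fun_add (hcomp.fun_pow 3)).congr_deriv (by push_cast; ring)

theorem cube_add_cube_neg_eq_two {𝕜 : Type*} [RCLike 𝕜] {f : 𝕜 → 𝕜} {s : Set 𝕜}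
    (hs : IsOpen s) (hs' : IsPreconnected s) (hneg : ∀ x ∈ s, -x ∈ s) (hs0 : 0 ∈ s)
    (h0 : f 0 = 1) (hf : ∀ z ∈ s, HasDerivAt f (-f (-z) ^ 2) z) {z : 𝕜} (hz : z ∈ s) :
    f z ^ 3 + f (-z) ^ 3 = 2 := by
  have hderiv (x : 𝕜) (hx : x ∈ s) : HasDerivAt (fun z => f z ^ 3 + f (-z) ^ 3) 0 x :=
    hasDerivAt_cube_add_cube_neg (hf x hx) (by simpa only [neg_neg] using hf (-x) (hneg x hx))
  calc f z ^ 3 + f (-z) ^ 3 = f 0 ^ 3 + f (-0) ^ 3 :=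
        hs.is_const_of_deriv_eq_zero hs'
          (fun x hx => (hderiv x hx).differentiableAt.differentiableWithinAt)
          (fun x hx => (hderiv x hx).deriv) hz hs0
    _ = 2 := by rw [neg_zero, h0]; norm_num

theorem stmt_2_general (f : ℝ → ℝ) (ε : ℝ) (h0 : f 0 = 1)
    (hf : ∀ z ∈ Set.Ioo (-ε) ε, HasDerivAt f (-(f (-z)) ^ 2) z) :
    ∀ z ∈ Set.Ioo (-ε) ε, (f z) ^ 3 + (f (-z)) ^ 3 = 2 := by
  intro z hz
  have hneg (x : ℝ) (hx : x ∈ Set.Ioo (-ε) ε) : -x ∈ Set.Ioo (-ε) ε :=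
    ⟨neg_lt_neg hx.2, neg_lt.mp hx.1⟩
  have hε : 0 < ε := by linarith [hz.1, hz.2]
  have hs0 : (0 : ℝ) ∈ Set.Ioo (-ε) ε := ⟨neg_lt_zero.mpr hε, hε⟩
  exact cube_add_cube_neg_eq_two isOpen_Ioo isPreconnected_Ioo hneg hs0 h0 hf hz

theorem stmt_2 (f : ℝ → ℝ) (ε : ℝ) (hε : 0 < ε) (h0 : f 0 = 1)
    (hf : ∀ z ∈ Set.Ioo (-ε) ε, HasDerivAt f (-(f (-z)) ^ 2) z) :
    ∀ z ∈ Set.Ioo (-ε) ε, (f z) ^ 3 + (f (-z)) ^ 3 = 2 :=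
  stmt_2_general f ε h0 hf
end

section
/- Let f be a formal power series (or analytic function) with f(0) = 1 satisfying f'(z) = -f(-z)². Define g(z) := -f(z)·f(-z). Then g satisfies the Weierstrass-type differential equation g'(z)² = 4·g(z)³ + 4. -/
/-!
Along solutions of `f' z = -f(-z)²`, the quantity `f(z)³ + f(-z)³` has derivative
`-3 f(z)² f(-z)² + 3 f(-z)² f(z)² = 0`, so it keeps its value `2` at the origin.
Writing `a = f z`, `b = f (-z)`, we have `g = -ab` and `g' = b³ - a³`, hence
`g'² = (a³ + b³)² - 4a³b³ = 4 + 4g³`.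
-/

theorem IsPreconnected.zero_mem_of_neg_mem {s : Set ℝ} (hsc : IsPreconnected s)
    (hs : ∀ x ∈ s, -x ∈ s) {z : ℝ} (hz : z ∈ s) : (0 : ℝ) ∈ s := by
  refine hsc.ordConnected.uIcc_subset hz (hs z hz) ?_
  rw [Set.mem_uIcc]
  rcases le_total z 0 with h | h
  · exact .inl ⟨h, neg_nonneg.2 h⟩
  · exact .inr ⟨neg_nonpos.2 h, h⟩

section PseudoFactorialODE

variable {f : ℝ → ℝ} {s : Set ℝ}

theorem hasDerivAt_comp_neg_of_hasDerivAt_neg_sq_comp_neg (hs : ∀ x ∈ s, -x ∈ s)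
    (hf : ∀ z ∈ s, HasDerivAt f (-f (-z) ^ 2) z) {z : ℝ} (hz : z ∈ s) :
    HasDerivAt (fun x => f (-x)) (f z ^ 2) z := by
  simpa [Function.comp_def] using (hf (-z) (hs z hz)).comp z (hasDerivAt_neg z)

theorem hasDerivAt_cube_add_cube_comp_neg (hs : ∀ x ∈ s, -x ∈ s)
    (hf : ∀ z ∈ s, HasDerivAt f (-f (-z) ^ 2) z) {z : ℝ} (hz : z ∈ s) :
    HasDerivAt (fun x => f x ^ 3 + f (-x) ^ 3) 0 z :=
  (((hf z hz).fun_pow 3).fun_add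
    ((hasDerivAt_comp_neg_of_hasDerivAt_neg_sq_comp_neg hs hf hz).fun_pow 3)).congr_deriv
    (by push_cast; ring)

theorem cube_add_cube_comp_neg_eq_two (hs : ∀ x ∈ s, -x ∈ s) (hso : IsOpen s)
    (hsc : IsPreconnected s) (h0 : f 0 = 1) (hf : ∀ z ∈ s, HasDerivAt f (-f (-z) ^ 2) z)
    {z : ℝ} (hz : z ∈ s) :
    f z ^ 3 + f (-z) ^ 3 = 2 := by
  have hderiv {w : ℝ} (hw : w ∈ s) := hasDerivAt_cube_add_cube_comp_neg hs hf hw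
  have hconst := hso.is_const_of_deriv_eq_zero hsc
    (fun w hw => (hderiv hw).differentiableAt.differentiableWithinAt)
    (fun w hw => (hderiv hw).deriv) hz (hsc.zero_mem_of_neg_mem hs hz)
  simpa [h0, one_add_one_eq_two] using hconst

theorem hasDerivAt_neg_mul_comp_neg (hs : ∀ x ∈ s, -x ∈ s)
    (hf : ∀ z ∈ s, HasDerivAt f (-f (-z) ^ 2) z) {z : ℝ} (hz : z ∈ s) :
    HasDerivAt (fun x => -(f x * f (-x))) (f (-z) ^ 3 - f z ^ 3) z :=
  ((hf z hz).fun_mul (hasDerivAt_comp_neg_of_hasDerivAt_neg_sq_comp_neg hs hf hz)).fun_neg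
    |>.congr_deriv (by ring)

end PseudoFactorialODE

theorem sq_cube_sub_cube_eq_of_cube_add_cube_eq_two {a b : ℝ} (h : a ^ 3 + b ^ 3 = 2) :
    (b ^ 3 - a ^ 3) ^ 2 = 4 * (-(a * b)) ^ 3 + 4 := by
  linear_combination (a ^ 3 + b ^ 3 + 2) * h

theorem stmt_3_general (f : ℝ → ℝ) (ε : ℝ) (h0 : f 0 = 1)
    (hf : ∀ z ∈ Set.Ioo (-ε) ε, HasDerivAt f (-(f (-z)) ^ 2) z)
    (g : ℝ → ℝ) (hg : ∀ z, g z = -(f z * f (-z))) :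
    ∀ z ∈ Set.Ioo (-ε) ε, (deriv g z) ^ 2 = 4 * (g z) ^ 3 + 4 := by
  intro z hz
  have hsymm : ∀ x ∈ Set.Ioo (-ε) ε, -x ∈ Set.Ioo (-ε) ε := fun x ⟨hl, hr⟩ =>
    ⟨neg_lt_neg hr, neg_lt.1 hl⟩
  obtain rfl : g = fun x => -(f x * f (-x)) := funext hg
  rw [(hasDerivAt_neg_mul_comp_neg hsymm hf hz).deriv]
  exact sq_cube_sub_cube_eq_of_cube_add_cube_eq_two
    (cube_add_cube_comp_neg_eq_two hsymm isOpen_Ioo isPreconnected_Ioo h0 hf hz)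

theorem stmt_3 (f : ℝ → ℝ) (ε : ℝ) (hε : 0 < ε) (h0 : f 0 = 1)
    (hf : ∀ z ∈ Set.Ioo (-ε) ε, HasDerivAt f (-(f (-z)) ^ 2) z)
    (g : ℝ → ℝ) (hg : ∀ z, g z = -(f z * f (-z))) :
    ∀ z ∈ Set.Ioo (-ε) ε, (deriv g z) ^ 2 = 4 * (g z) ^ 3 + 4 :=
  stmt_3_general f ε h0 hf g hg
end

section
/- The integral ∫_0^{2^{-1/3}} dy/(1-y³)^{2/3} equals (1/6)·B(1/3,1/3), where B is the Euler Beta function. -/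
/-! The Beta integrand with equal parameters is symmetric about `1/2`, so `B(1/3, 1/3)` is twice
its integral over `[0, 1/2]`. The substitution `t = y³` maps `[0, 2^(-1/3)]` onto `[0, 1/2]` and turns
`t^(-2/3) (1 - t)^(-2/3) dt` into `3 (1 - y³)^(-2/3) dy`. -/

open MeasureTheory intervalIntegral Real Set

theorem intervalIntegral.integral_zero_one_eq_two_mul_of_symm {f : ℝ → ℝ}
    (hsymm : ∀ x, f (1 - x) = f x) (hf : IntervalIntegrable f volume 0 (1 / 2)) :
    ∫ t in (0:ℝ)..1, f t = 2 * ∫ t in (0:ℝ)..(1 / 2), f t := by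
  have hreflect : ∫ t in (1 / 2:ℝ)..1, f t = ∫ t in (0:ℝ)..(1 / 2), f t := by
    have h := integral_comp_sub_left (a := (0:ℝ)) (b := 1 / 2) f 1
    norm_num [hsymm] at h
    exact h.symm
  have hf' : IntervalIntegrable f volume (1 / 2) 1 := by
    have h := (hf.comp_sub_left 1).symm
    norm_num [hsymm] at h
    exact h
  rw [← integral_add_adjacent_intervals hf hf', hreflect, two_mul]

theorem intervalIntegrable_rpow_mul_one_sub_rpow {a : ℝ} (ha : 0 < a) (b : ℝ) :
    IntervalIntegrable (fun t : ℝ => t ^ (a - 1) * (1 - t) ^ (b - 1)) volume 0 (1 / 2) := by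
  refine (intervalIntegrable_rpow' (by linarith)).mul_continuousOn ?_
  refine ContinuousOn.rpow_const (by fun_prop) fun t ht => Or.inl ?_
  rw [uIcc_of_le (by norm_num)] at ht
  linarith [ht.2]

theorem image_pow_Icc_zero {n : ℕ} (hn : n ≠ 0) {b : ℝ} (hb : 0 ≤ b) :
    (fun y : ℝ => y ^ n) '' Icc 0 b = Icc 0 (b ^ n) := by
  refine Subset.antisymm ?_ ?_
  · rintro _ ⟨y, hy, rfl⟩
    exact ⟨pow_nonneg hy.1 n, pow_le_pow_left₀ hy.1 hy.2 n⟩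
  · simpa [zero_pow hn] using intermediate_value_Icc hb (f := fun y : ℝ => y ^ n) (by fun_prop)

theorem intervalIntegral.integral_comp_pow_mul_deriv {n : ℕ} (hn : n ≠ 0) {b : ℝ} (hb : 0 ≤ b)
    (g : ℝ → ℝ) :
    ∫ y in (0:ℝ)..b, g (y ^ n) * (n * y ^ (n - 1)) = ∫ t in (0:ℝ)..b ^ n, g t := by
  have hderiv : ∀ y ∈ Icc 0 b, HasDerivWithinAt (fun y : ℝ => y ^ n) (n * y ^ (n - 1)) (Icc 0 b) y :=
    fun y _ => (hasDerivAt_pow n y).hasDerivWithinAt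
  have hinj : InjOn (fun y : ℝ => y ^ n) (Icc 0 b) :=
    (pow_left_strictMonoOn₀ hn).injOn.mono fun y hy => hy.1
  have h := integral_image_eq_integral_abs_deriv_smul measurableSet_Icc hderiv hinj g
  rw [image_pow_Icc_zero hn hb] at h
  rw [integral_of_le hb, integral_of_le (pow_nonneg hb n), ← integral_Icc_eq_integral_Ioc,
    ← integral_Icc_eq_integral_Ioc, h]
  refine setIntegral_congr_fun measurableSet_Icc fun y hy => ?_
  rw [smul_eq_mul, abs_of_nonneg (mul_nonneg n.cast_nonneg (pow_nonneg hy.1 _)), mul_comm]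

theorem beta_third_comp_cube_mul_deriv {y : ℝ} (hy : 0 < y) (hy1 : y ^ 3 ≤ 1) :
    (y ^ 3) ^ ((1:ℝ)/3 - 1) * (1 - y ^ 3) ^ ((1:ℝ)/3 - 1) * (3 * y ^ 2) =
      3 * (1 / (1 - y ^ 3) ^ ((2:ℝ)/3)) := by
  have hcube : (y ^ 3) ^ ((1:ℝ)/3 - 1) = (y ^ 2)⁻¹ := by
    rw [← rpow_natCast y 3, ← rpow_mul hy.le, ← rpow_natCast y 2, ← rpow_neg hy.le]
    norm_num
  rw [hcube, show (1:ℝ)/3 - 1 = -((2:ℝ)/3) by norm_num, rpow_neg (by linarith)]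
  field_simp

theorem stmt_7 :
    (∫ y in (0:ℝ)..(2:ℝ) ^ (-(1:ℝ)/3), 1 / (1 - y ^ 3) ^ ((2:ℝ)/3)) =
      (1/6) * ∫ t in (0:ℝ)..1, t ^ ((1:ℝ)/3 - 1) * (1 - t) ^ ((1:ℝ)/3 - 1) := by
  set b : ℝ := (2:ℝ) ^ (-(1:ℝ)/3)
  have hb : 0 < b := by positivity
  have hb3 : b ^ 3 = 1 / 2 := by
    rw [← rpow_natCast, ← rpow_mul zero_le_two]
    norm_num
  have hsubst := integral_comp_pow_mul_deriv three_ne_zero hb.le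
    fun t => t ^ ((1:ℝ)/3 - 1) * (1 - t) ^ ((1:ℝ)/3 - 1)
  have hcongr : EqOn (fun y : ℝ => 3 * (1 / (1 - y ^ 3) ^ ((2:ℝ)/3)))
      (fun y : ℝ => (y ^ 3) ^ ((1:ℝ)/3 - 1) * (1 - y ^ 3) ^ ((1:ℝ)/3 - 1) * ((3:ℕ) * y ^ (3 - 1)))
      (uIoo 0 b) := by
    intro y hy
    rw [uIoo_of_le hb.le] at hy
    have hy3 : y ^ 3 ≤ 1 := (pow_le_pow_left₀ hy.1.le hy.2.le 3).trans (by rw [hb3]; norm_num)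
    exact_mod_cast (beta_third_comp_cube_mul_deriv hy.1 hy3).symm
  calc (∫ y in (0:ℝ)..b, 1 / (1 - y ^ 3) ^ ((2:ℝ)/3))
      = (1/3) * ∫ y in (0:ℝ)..b, 3 * (1 / (1 - y ^ 3) ^ ((2:ℝ)/3)) := by
        rw [intervalIntegral.integral_const_mul]; ring
    _ = (1/3) * ∫ t in (0:ℝ)..(1/2), t ^ ((1:ℝ)/3 - 1) * (1 - t) ^ ((1:ℝ)/3 - 1) := by
        rw [integral_congr_uIoo hcongr, hsubst, hb3]
    _ = _ := by
        rw [integral_zero_one_eq_two_mul_of_symm (fun x => by rw [sub_sub_cancel, mul_comm])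
          (intervalIntegrable_rpow_mul_one_sub_rpow (by norm_num) _)]
        ring
end

section
/- For the Weierstrass function ℘(z) = ℘(z; 0, -4) satisfying ℘'² = 4℘³ + 4 with ℘(z) ~ z^{-2} as z → 0, the real half-period ϖ := ∫_{-1}^{∞} dw/√(4w³+4) equals (1/6)B(1/3,1/2) + (1/6)B(1/3,1/6) = 2^{-7/3}·3^{1/2}·π^{-1}·Γ(1/3)³. -/
/-!
Split the integral at `0`. On `(-1, 0)` reflect `w ↦ -w` and substitute `t = w³`; on `(0, ∞)`
substitute `u = w³` and then `t = u / (1 + u)`. Both pieces become Beta integrals, giving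
`B(1/3, 1/2) / 6` and `B(1/3, 1/6) / 6`. Reflection at `1/6` shows `B(1/3, 1/2) = B(1/3, 1/6) / 2`,
and Legendre duplication at `1/6` together with reflection at `1/3` gives
`Γ(1/6) = 2^(-1/3) √3 Γ(1/3)² / √π`, whence the closed form.
-/

open MeasureTheory Set Real ProbabilityTheory

theorem integral_rpow_mul_one_sub_rpow {a b : ℝ} (ha : 0 < a) (hb : 0 < b) :
    ∫ t in Ioo 0 1, t ^ (a - 1) * (1 - t) ^ (b - 1) = beta a b := by
  have hofReal : ∀ t ∈ Ioc (0 : ℝ) 1, (t : ℂ) ^ ((a : ℂ) - 1) * (1 - (t : ℂ)) ^ ((b : ℂ) - 1) =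
      ((t ^ (a - 1) * (1 - t) ^ (b - 1) : ℝ) : ℂ) := fun t ht => by
    rw [Complex.ofReal_mul, Complex.ofReal_cpow ht.1.le, Complex.ofReal_cpow (sub_nonneg.2 ht.2)]
    push_cast; ring
  rw [beta_eq_betaIntegralReal a b ha hb, Complex.betaIntegral,
    intervalIntegral.integral_of_le zero_le_one, setIntegral_congr_fun measurableSet_Ioc hofReal,
    integral_complex_ofReal, Complex.ofReal_re, integral_Ioc_eq_integral_Ioo]

theorem integral_rpow_mul_one_add_rpow_neg {a b : ℝ} (ha : 0 < a) (hb : 0 < b) :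
    ∫ u in Ioi 0, u ^ (a - 1) * (1 + u) ^ (-(a + b)) = beta a b := by
  have hderiv : ∀ t ∈ Ioo (0 : ℝ) 1,
      HasDerivWithinAt (fun t => t / (1 - t)) (((1 - t) ^ 2)⁻¹) (Ioo 0 1) t := fun t ht => by
    have h1 : (1 : ℝ) - t ≠ 0 := (sub_pos.2 ht.2).ne'
    refine (((hasDerivAt_id' t).div ((hasDerivAt_id' t).const_sub 1) h1).congr_deriv
      ?_).hasDerivWithinAt
    field_simp; ring
  have hinj : InjOn (fun t : ℝ => t / (1 - t)) (Ioo 0 1) := fun x hx y hy h => by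
    have := (sub_pos.2 hx.2).ne'
    have := (sub_pos.2 hy.2).ne'
    field_simp at h; linarith
  have himage : (fun t : ℝ => t / (1 - t)) '' Ioo 0 1 = Ioi 0 := by
    ext u
    refine ⟨?_, fun (hu : 0 < u) => ⟨u / (1 + u), ⟨?_, ?_⟩, ?_⟩⟩
    · rintro ⟨t, ht, rfl⟩; exact div_pos ht.1 (sub_pos.2 ht.2)
    · positivity
    · rw [div_lt_one (by positivity)]; linarith
    · field_simp; ring
  rw [← himage, integral_image_eq_integral_abs_deriv_smul measurableSet_Ioo hderiv hinj,
    ← integral_rpow_mul_one_sub_rpow ha hb]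
  refine setIntegral_congr_fun measurableSet_Ioo fun t ht => ?_
  have h1 : 0 < 1 - t := sub_pos.2 ht.2
  have hsum : 1 + t / (1 - t) = (1 - t)⁻¹ := by field_simp; ring
  rw [smul_eq_mul, abs_of_pos (by positivity), hsum, div_rpow ht.1.le h1.le, inv_rpow h1.le,
    ← rpow_neg h1.le, neg_neg, ← rpow_natCast, ← rpow_neg h1.le, div_eq_mul_inv,
    ← rpow_neg h1.le]
  have hexp : (1 - t) ^ (b - 1) =
      (1 - t) ^ (-(2 : ℝ)) * (1 - t) ^ (-(a - 1)) * (1 - t) ^ (a + b) := by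
    rw [← rpow_add h1, ← rpow_add h1]; ring_nf
  rw [hexp]; push_cast; ring

theorem integral_one_add_rpow_rpow_neg {n s : ℝ} (hn : 0 < n) (hs : n⁻¹ < s) :
    ∫ w in Ioi 0, (1 + w ^ n) ^ (-s) = n⁻¹ * beta n⁻¹ (s - n⁻¹) := by
  rw [← integral_comp_rpow_Ioi_of_pos (inv_pos.2 hn),
    ← integral_rpow_mul_one_add_rpow_neg (inv_pos.2 hn) (sub_pos.2 hs), ← integral_const_mul]
  refine setIntegral_congr_fun measurableSet_Ioi fun u hu => ?_
  rw [smul_eq_mul, ← rpow_mul (le_of_lt hu), inv_mul_cancel₀ hn.ne', rpow_one]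
  ring_nf

theorem integral_one_sub_rpow_rpow {n b : ℝ} (hn : 0 < n) (hb : 0 < b) :
    ∫ v in Ioo 0 1, (1 - v ^ n) ^ (b - 1) = n⁻¹ * beta n⁻¹ b := by
  have hp : 0 < n⁻¹ := inv_pos.2 hn
  have hderiv : ∀ t ∈ Ioo (0 : ℝ) 1,
      HasDerivWithinAt (fun t => t ^ n⁻¹) (n⁻¹ * t ^ (n⁻¹ - 1)) (Ioo 0 1) t := fun t ht =>
    (hasDerivAt_rpow_const (Or.inl ht.1.ne')).hasDerivWithinAt
  have hinj : InjOn (fun t : ℝ => t ^ n⁻¹) (Ioo 0 1) :=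
    (rpow_left_injOn hp.ne').mono fun t ht => le_of_lt ht.1
  have himage : (fun t : ℝ => t ^ n⁻¹) '' Ioo 0 1 = Ioo 0 1 := by
    ext v
    refine ⟨?_, fun hv => ⟨v ^ n, ⟨rpow_pos_of_pos hv.1 n, rpow_lt_one hv.1.le hv.2 hn⟩, ?_⟩⟩
    · rintro ⟨t, ht, rfl⟩; exact ⟨rpow_pos_of_pos ht.1 _, rpow_lt_one ht.1.le ht.2 hp⟩
    · simp only [← rpow_mul hv.1.le, mul_inv_cancel₀ hn.ne', rpow_one]
  rw [← himage, integral_image_eq_integral_abs_deriv_smul measurableSet_Ioo hderiv hinj,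
    ← integral_rpow_mul_one_sub_rpow hp hb, ← integral_const_mul]
  refine setIntegral_congr_fun measurableSet_Ioo fun t ht => ?_
  rw [smul_eq_mul, abs_of_pos (by have := ht.1; positivity), ← rpow_mul ht.1.le,
    inv_mul_cancel₀ hn.ne', rpow_one]
  ring

theorem integral_Ioo_neg_comp_neg {E : Type*} [NormedAddCommGroup E] [NormedSpace ℝ E]
    (f : ℝ → E) {a b : ℝ} (hab : a ≤ b) :
    ∫ w in Ioo (-b) (-a), f w = ∫ v in Ioo a b, f (-v) := by
  rw [← integral_Ioc_eq_integral_Ioo, ← integral_Ioc_eq_integral_Ioo,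
    ← intervalIntegral.integral_of_le hab, ← intervalIntegral.integral_of_le (neg_le_neg hab),
    intervalIntegral.integral_comp_neg]

theorem beta_one_third_one_sixth :
    beta (1 / 3) (1 / 6) = 2 ^ (-(1 / 3) : ℝ) * √3 / π * Gamma (1 / 3) ^ 3 := by
  have hreflect : Gamma (1 / 3) * Gamma (2 / 3) * √3 = 2 * π := by
    have h := Gamma_mul_Gamma_one_sub (1 / 3)
    rw [show (1 : ℝ) - 1 / 3 = 2 / 3 by norm_num, show π * (1 / 3) = π / 3 by ring,
      sin_pi_div_three] at h
    rw [h]; field_simp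
  have hdup : Gamma (1 / 6) * Gamma (2 / 3) = Gamma (1 / 3) * 2 ^ (2 / 3 : ℝ) * √π := by
    have h := Gamma_mul_Gamma_add_half (1 / 6)
    norm_num at h ⊢
    exact h
  have h2 : (2 : ℝ) ^ (2 / 3 : ℝ) = 2 * 2 ^ (-(1 / 3) : ℝ) := by
    rw [← rpow_one_add' zero_le_two (by norm_num)]; norm_num
  have hG23 : 0 < Gamma (2 / 3) := Gamma_pos_of_pos (by norm_num)
  rw [beta, show (1 / 3 + 1 / 6 : ℝ) = 1 / 2 by norm_num, Gamma_one_half_eq]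
  field_simp
  refine mul_right_cancel₀ hG23.ne' ?_
  rw [h2] at hdup
  linear_combination π * hdup - Gamma (1 / 3) * √π * 2 ^ (-(1 / 3) : ℝ) * hreflect

theorem beta_one_third_one_half : beta (1 / 3) (1 / 2) = beta (1 / 3) (1 / 6) / 2 := by
  have hreflect : Gamma (1 / 6) * Gamma (5 / 6) = 2 * π := by
    have h := Gamma_mul_Gamma_one_sub (1 / 6)
    rw [show (1 : ℝ) - 1 / 6 = 5 / 6 by norm_num, show π * (1 / 6) = π / 6 by ring,
      sin_pi_div_six] at h
    rw [h]; field_simp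
  have hsqrtπ : √π ^ 2 = π := sq_sqrt pi_pos.le
  rw [beta, beta, show (1 / 3 + 1 / 2 : ℝ) = 5 / 6 by norm_num,
    show (1 / 3 + 1 / 6 : ℝ) = 1 / 2 by norm_num, Gamma_one_half_eq]
  field_simp
  linear_combination 2 * hsqrtπ - hreflect

theorem one_div_sqrt_four_mul_add_four {x : ℝ} (hx : 0 ≤ 1 + x) :
    1 / √(4 * x + 4) = 2⁻¹ * (1 + x) ^ (-(1 / 2) : ℝ) := by
  rw [show 4 * x + 4 = 2 ^ 2 * (1 + x) by ring, sqrt_mul (by positivity), sqrt_sq zero_le_two,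
    sqrt_eq_rpow, rpow_neg hx, one_div, mul_inv]

theorem integral_Ioi_zero_one_div_sqrt_four_mul_cube_add_four :
    ∫ w in Ioi 0, 1 / √(4 * w ^ 3 + 4) = 1 / 6 * beta (1 / 3) (1 / 6) := by
  rw [setIntegral_congr_fun measurableSet_Ioi fun w (hw : 0 < w) => by
      rw [one_div_sqrt_four_mul_add_four (by positivity), ← rpow_natCast],
    integral_const_mul, integral_one_add_rpow_rpow_neg (by norm_num) (by norm_num)]
  norm_num
  ring

theorem integral_Ioo_neg_one_zero_one_div_sqrt_four_mul_cube_add_four :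
    ∫ w in Ioo (-1) 0, 1 / √(4 * w ^ 3 + 4) = 1 / 6 * beta (1 / 3) (1 / 2) := by
  rw [← neg_zero, integral_Ioo_neg_comp_neg _ zero_le_one,
    setIntegral_congr_fun measurableSet_Ioo fun v (hv : v ∈ Ioo 0 1) => by
      have hv3 : v ^ 3 < 1 := pow_lt_one₀ hv.1.le hv.2 three_ne_zero
      rw [Odd.neg_pow (by decide), one_div_sqrt_four_mul_add_four (by linarith),
        ← sub_eq_add_neg, ← rpow_natCast, show -(1 / 2 : ℝ) = 1 / 2 - 1 by norm_num],
    integral_const_mul, integral_one_sub_rpow_rpow (by norm_num) (by norm_num)]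
  norm_num
  ring

theorem integral_Ioi_neg_one_one_div_sqrt_four_mul_cube_add_four :
    ∫ w in Ioi (-1), 1 / √(4 * w ^ 3 + 4) =
      1 / 6 * beta (1 / 3) (1 / 2) + 1 / 6 * beta (1 / 3) (1 / 6) := by
  have hne : ∀ b : ℝ, 0 < b → 1 / 6 * beta (1 / 3) b ≠ 0 := fun b hb =>
    (mul_pos (by norm_num) (beta_pos (by norm_num) hb)).ne'
  -- A non-integrable function has integral zero, so both pieces are integrable.
  have hIoc : IntegrableOn (fun w : ℝ => 1 / √(4 * w ^ 3 + 4)) (Ioc (-1) 0) := by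
    rw [integrableOn_Ioc_iff_integrableOn_Ioo]
    exact .of_integral_ne_zero <|
      integral_Ioo_neg_one_zero_one_div_sqrt_four_mul_cube_add_four ▸ hne _ (by norm_num)
  have hIoi : IntegrableOn (fun w : ℝ => 1 / √(4 * w ^ 3 + 4)) (Ioi 0) :=
    .of_integral_ne_zero <|
      integral_Ioi_zero_one_div_sqrt_four_mul_cube_add_four ▸ hne _ (by norm_num)
  rw [← Ioc_union_Ioi_eq_Ioi (by norm_num : (-1 : ℝ) ≤ 0),
    setIntegral_union (Ioc_disjoint_Ioi le_rfl) measurableSet_Ioi hIoc hIoi,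
    integral_Ioc_eq_integral_Ioo, integral_Ioo_neg_one_zero_one_div_sqrt_four_mul_cube_add_four,
    integral_Ioi_zero_one_div_sqrt_four_mul_cube_add_four]

theorem stmt_10 :
    (∫ w in Set.Ioi (-1:ℝ), 1 / Real.sqrt (4 * w ^ 3 + 4)) =
      (1/6) * (Real.Gamma (1/3) * Real.Gamma (1/2) / Real.Gamma (1/3 + 1/2)) +
      (1/6) * (Real.Gamma (1/3) * Real.Gamma (1/6) / Real.Gamma (1/3 + 1/6)) ∧
    (∫ w in Set.Ioi (-1:ℝ), 1 / Real.sqrt (4 * w ^ 3 + 4)) =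
      (2:ℝ) ^ (-(7:ℝ)/3) * Real.sqrt 3 / Real.pi * Real.Gamma (1/3) ^ 3 := by
  refine ⟨integral_Ioi_neg_one_one_div_sqrt_four_mul_cube_add_four, ?_⟩
  have h2 : (2 : ℝ) ^ (-(7 : ℝ) / 3) = 2 ^ (-(1 / 3) : ℝ) / 4 := by
    rw [show -(7 : ℝ) / 3 = -(1 / 3) + (-2 : ℤ) by norm_num, rpow_add two_pos, rpow_intCast]
    norm_num [div_eq_mul_inv]
  rw [integral_Ioi_neg_one_one_div_sqrt_four_mul_cube_add_four, beta_one_third_one_half,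
    beta_one_third_one_sixth, h2]
  ring
end

section
/- Let a_j = -j²·(2-(-1)^j) for j ≥ 1, and for a positive integer m define H_m := Π_{j=1}^{m-1} a_j^{m-j}. Then H_m = (-1)^{⌊m/2⌋} · 3^{⌊m²/4⌋} · (Π_{k=1}^{m-1} k!)², i.e. H_m = (-1)^{m/2} 3^{m²/4} (Π k!)² for m even and (-1)^{(m-1)/2} 3^{(m²-1)/4} (Π k!)² for m odd. -/
private lemma negpow {a b : ℕ} (h : a % 2 = b % 2) : (-1 : ℤ) ^ a = (-1) ^ b := by
  conv_lhs => rw [← Nat.div_add_mod a 2]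
  conv_rhs => rw [← Nat.div_add_mod b 2]
  rw [pow_add, pow_add, pow_mul, pow_mul, h]
  norm_num

private lemma rowprod (m : ℕ) :
    ∏ j ∈ Finset.Icc 1 m, (-(j : ℤ) ^ 2 * (2 - (-1) ^ j)) =
      (-1) ^ m * 3 ^ ((m + 1) / 2) * (Nat.factorial m : ℤ) ^ 2 := by
  induction m with
  | zero => simp
  | succ n ih =>
    rw [Finset.prod_Icc_succ_top (by omega), ih]
    rcases Nat.even_or_odd n with he | ho
    · obtain ⟨k, rfl⟩ := he
      have h1 : (k + k + 1 + 1) / 2 = (k + k + 1) / 2 + 1 := by omega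
      rw [h1]
      have h2 : (-1 : ℤ) ^ (k + k + 1) = -1 := Odd.neg_one_pow ⟨k, by ring⟩
      have h3 : (-1 : ℤ) ^ (k + k) = 1 := Even.neg_one_pow ⟨k, by ring⟩
      have hf : ((k + k + 1).factorial : ℤ) = (k + k + 1) * (k + k).factorial := by
        rw [Nat.factorial_succ]; push_cast; ring
      rw [h2, h3, hf]
      push_cast
      ring
    · obtain ⟨k, rfl⟩ := ho
      have h1 : (2 * k + 1 + 1 + 1) / 2 = (2 * k + 1 + 1) / 2 := by omega
      rw [h1]
      have h2 : (-1 : ℤ) ^ (2 * k + 1 + 1) = 1 := Even.neg_one_pow ⟨k + 1, by ring⟩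
      have h3 : (-1 : ℤ) ^ (2 * k + 1) = -1 := Odd.neg_one_pow ⟨k, by ring⟩
      have hf : ((2 * k + 1 + 1).factorial : ℤ) = (2 * k + 1 + 1) * (2 * k + 1).factorial := by
        rw [Nat.factorial_succ]; push_cast; ring
      rw [h2, h3, hf]
      push_cast
      ring

theorem stmt_17 (m : ℕ) (hm : 0 < m) :
    ∏ j ∈ Finset.Icc 1 (m - 1), (-(j : ℤ) ^ 2 * (2 - (-1) ^ j)) ^ (m - j) =
      (-1) ^ (m / 2) * 3 ^ (m ^ 2 / 4) *
        (∏ k ∈ Finset.Icc 1 (m - 1), (Nat.factorial k : ℤ)) ^ 2 := by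
  obtain ⟨n, rfl⟩ : ∃ n, m = n + 1 := ⟨m - 1, by omega⟩
  clear hm
  induction n with
  | zero => simp
  | succ n ih =>
    have ih' := ih
    simp only [Nat.add_sub_cancel] at ih' ⊢
    have h1 : ∏ j ∈ Finset.Icc 1 (n + 1), (-(j : ℤ) ^ 2 * (2 - (-1) ^ j)) ^ (n + 1 + 1 - j)
        = (∏ j ∈ Finset.Icc 1 (n + 1), (-(j : ℤ) ^ 2 * (2 - (-1) ^ j)) ^ (n + 1 - j)) *
          ∏ j ∈ Finset.Icc 1 (n + 1), (-(j : ℤ) ^ 2 * (2 - (-1) ^ j)) := by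
      rw [← Finset.prod_mul_distrib]
      refine Finset.prod_congr rfl fun j hj => ?_
      rw [← pow_succ]
      congr 1
      simp only [Finset.mem_Icc] at hj
      omega
    have h2 : ∏ j ∈ Finset.Icc 1 (n + 1), (-(j : ℤ) ^ 2 * (2 - (-1) ^ j)) ^ (n + 1 - j)
        = ∏ j ∈ Finset.Icc 1 n, (-(j : ℤ) ^ 2 * (2 - (-1) ^ j)) ^ (n + 1 - j) := by
      rw [Finset.prod_Icc_succ_top (by omega)]
      simp
    have h3 : ∏ k ∈ Finset.Icc 1 (n + 1), (Nat.factorial k : ℤ)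
        = (∏ k ∈ Finset.Icc 1 n, (Nat.factorial k : ℤ)) * (Nat.factorial (n + 1) : ℤ) := by
      rw [Finset.prod_Icc_succ_top (by omega)]
    rw [h1, h2, ih', rowprod (n + 1), h3]
    have e3 : (n + 1) ^ 2 / 4 + (n + 1 + 1) / 2 = (n + 1 + 1) ^ 2 / 4 := by
      rcases Nat.even_or_odd n with ⟨k, rfl⟩ | ⟨k, rfl⟩
      · have : (k + k + 1) ^ 2 = 4 * (k * k + k) + 1 := by ring
        have : (k + k + 1 + 1) ^ 2 = 4 * (k * k + 2 * k + 1) := by ring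
        omega
      · have : (2 * k + 1 + 1) ^ 2 = 4 * (k * k + 2 * k + 1) := by ring
        have : (2 * k + 1 + 1 + 1) ^ 2 = 4 * (k * k + 3 * k + 2) + 1 := by ring
        omega
    have e1 : (-1 : ℤ) ^ ((n + 1) / 2) * (-1) ^ (n + 1) = (-1) ^ ((n + 1 + 1) / 2) := by
      rcases Nat.even_or_odd n with ⟨k, rfl⟩ | ⟨k, rfl⟩
      · have d1 : (k + k + 1) / 2 = k := by omega
        have d2 : (k + k + 1 + 1) / 2 = k + 1 := by omega
        have h2 : (-1 : ℤ) ^ (k + k + 1) = -1 := Odd.neg_one_pow ⟨k, by ring⟩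
        rw [d1, d2, h2, pow_succ]
      · have d1 : (2 * k + 1 + 1) / 2 = k + 1 := by omega
        have d2 : (2 * k + 1 + 1 + 1) / 2 = k + 1 := by omega
        have h2 : (-1 : ℤ) ^ (2 * k + 1 + 1) = 1 := Even.neg_one_pow ⟨k + 1, by ring⟩
        rw [d1, d2, h2, mul_one]
    rw [← e3, ← e1, pow_add]
    ring
end

section
/- Let (α_n) be the pseudo-factorials: α_0 = 1, α_{n+1} = (-1)^{n+1} Σ_{k=0}^n C(n,k) α_k α_{n-k}. Then α_n ≡ (-1)^n (mod 3) for all n ≥ 0. -/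
theorem stmt_18 (α : ℕ → ℤ) (h0 : α 0 = 1)
    (hrec : ∀ n : ℕ, α (n + 1) =
      (-1) ^ (n + 1) * ∑ k ∈ Finset.range (n + 1), (n.choose k : ℤ) * α k * α (n - k)) :
    ∀ n : ℕ, α n ≡ (-1) ^ n [ZMOD 3] := by
  have key : ∀ n : ℕ, ((α n : ZMod 3)) = (-1) ^ n := by
    intro n
    induction n using Nat.strong_induction_on with
    | _ n ih =>
      match n with
      | 0 => simp [h0]
      | Nat.succ m =>
        have : (α (m + 1) : ZMod 3) =
            (-1) ^ (m + 1) * ∑ k ∈ Finset.range (m + 1),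
              (m.choose k : ZMod 3) * (α k : ZMod 3) * (α (m - k) : ZMod 3) := by
          rw [hrec m]; push_cast; ring
        rw [this]
        have hsum : ∑ k ∈ Finset.range (m + 1),
            (m.choose k : ZMod 3) * (α k : ZMod 3) * (α (m - k) : ZMod 3)
            = (-1 : ZMod 3) ^ m * 2 ^ m := by
          have : ∀ k ∈ Finset.range (m + 1),
              (m.choose k : ZMod 3) * (α k : ZMod 3) * (α (m - k) : ZMod 3)
              = (-1 : ZMod 3) ^ m * (m.choose k : ZMod 3) := by
            intro k hk
            have hk' : k ≤ m := Nat.lt_succ_iff.mp (Finset.mem_range.mp hk)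
            rw [ih k (Nat.lt_succ_of_le hk'), ih (m - k) (Nat.lt_succ_of_le (Nat.sub_le m k))]
            rw [mul_assoc, ← pow_add, Nat.add_sub_cancel' hk']
            ring
          rw [Finset.sum_congr rfl this, ← Finset.mul_sum]
          congr 1
          have := Nat.sum_range_choose m
          calc ∑ k ∈ Finset.range (m + 1), (m.choose k : ZMod 3)
              = ((∑ k ∈ Finset.range (m + 1), m.choose k : ℕ) : ZMod 3) := by push_cast; rfl
            _ = ((2 ^ m : ℕ) : ZMod 3) := by rw [this]
            _ = 2 ^ m := by push_cast; rfl
        rw [hsum]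
        have h2 : (2 : ZMod 3) = -1 := by decide
        rw [h2, ← mul_pow]
        norm_num
  intro n
  exact (ZMod.intCast_eq_intCast_iff (α n) ((-1) ^ n) 3).mp (by push_cast [key n]; ring)
end
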